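/- For any constant $\alpha \in (0,2)$ and dimension $d \geq 1$, and for any nonzero vector $x \in \mathbb{R}^d$, the integral $\int_{\mathbb{R}^d} \frac{1 - \cos(\langle t, x\rangle)}{|t|^{d+\alpha}}\, dt$ equals $C(d,\alpha) |x|^\alpha$, where $C(d,\alpha) = \frac{2\pi^{d/2}\Gamma(1-\alpha/2)}{\alpha 2^{\alpha}\Gamma((d+\alpha)/2)}$. -/

import Mathlib

/-!
Subordination: with `p = (d + α) / 2`, `‖t‖ ^ (-(d + α)) = Γ(p)⁻¹ ∫₀^∞ s ^ (p - 1) e^{-s ‖t‖²} ds`.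
The integrand is nonnegative, so the two integrals can be swapped, and the `t`-integral is then
Gaussian: `∫ (1 - cos ⟪t, x⟫) e^{-s ‖t‖²} dt = (π / s) ^ (d / 2) (1 - e^{-‖x‖² / (4 s)})`, the real
part of the Fourier transform of a Gaussian. The substitution `s = ‖x‖² / (4 u)` turns what is left
into `∫₀^∞ u ^ (-α/2 - 1) (1 - e^{-u}) du`, which integration by parts against the Gamma integral
evaluates as `Γ(1 - α/2) / (α/2)`.
-/

open MeasureTheory Real

noncomputable def energyConst (d : ℕ) (α : ℝ) : ℝ :=
  (2 * Real.pi ^ ((d : ℝ) / 2) * Real.Gamma (1 - α / 2)) /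
    (α * 2 ^ α * Real.Gamma (((d : ℝ) + α) / 2))

open Set Filter Topology

section OneDimensional

variable {β : ℝ}

lemma one_sub_exp_neg_nonneg {u : ℝ} (hu : 0 ≤ u) : 0 ≤ 1 - rexp (-u) := by
  simpa using exp_le_one_iff.mpr (neg_nonpos.mpr hu)

lemma one_sub_exp_neg_le (u : ℝ) : 1 - rexp (-u) ≤ u := by
  linarith [one_sub_le_exp_neg u]

lemma integrableOn_rpow_mul_one_sub_exp_neg (hβ : 0 < β) (hβ1 : β < 1) :
    IntegrableOn (fun u : ℝ => u ^ (-β - 1) * (1 - rexp (-u))) (Ioi 0) := by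
  have hmeas : AEStronglyMeasurable (fun u : ℝ => u ^ (-β - 1) * (1 - rexp (-u))) := by
    fun_prop
  rw [← Ioc_union_Ioi_eq_Ioi zero_le_one, integrableOn_union]
  constructor
  · refine Integrable.mono' (intervalIntegral.intervalIntegrable_rpow' (r := -β) (by linarith)).1
      hmeas.restrict ?_
    filter_upwards [ae_restrict_mem measurableSet_Ioc] with u ⟨hu, _⟩
    rw [norm_of_nonneg (mul_nonneg (rpow_nonneg hu.le _) (one_sub_exp_neg_nonneg hu.le))]
    calc u ^ (-β - 1) * (1 - rexp (-u)) ≤ u ^ (-β - 1) * u :=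
          mul_le_mul_of_nonneg_left (one_sub_exp_neg_le u) (rpow_nonneg hu.le _)
      _ = u ^ (-β) := by rw [← rpow_add_one hu.ne']; ring_nf
  · refine Integrable.mono' (integrableOn_Ioi_rpow_of_lt (by linarith : -β - 1 < -1) one_pos)
      hmeas.restrict ?_
    filter_upwards [ae_restrict_mem measurableSet_Ioi] with u (hu : 1 < u)
    have hu0 : 0 < u := one_pos.trans hu
    rw [norm_of_nonneg (mul_nonneg (rpow_nonneg hu0.le _) (one_sub_exp_neg_nonneg hu0.le))]
    exact mul_le_of_le_one_right (rpow_nonneg hu0.le _) (by linarith [exp_pos (-u)])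

lemma tendsto_rpow_neg_mul_one_sub_exp_neg_nhdsGT_zero (hβ1 : β < 1) :
    Tendsto (fun x : ℝ => x ^ (-β) * (1 - rexp (-x))) (𝓝[>] 0) (𝓝 0) := by
  have hlim : Tendsto (fun x : ℝ => x ^ (1 - β)) (𝓝[>] 0) (𝓝 0) := by
    have := (continuousAt_rpow_const 0 (1 - β) (Or.inr (by linarith))).tendsto
    simpa [zero_rpow (by linarith : 1 - β ≠ 0)] using this.mono_left nhdsWithin_le_nhds
  refine squeeze_zero' ?_ ?_ hlim
  all_goals filter_upwards [self_mem_nhdsWithin] with x (hx : 0 < x)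
  · exact mul_nonneg (rpow_nonneg hx.le _) (one_sub_exp_neg_nonneg hx.le)
  calc x ^ (-β) * (1 - rexp (-x)) ≤ x ^ (-β) * x :=
        mul_le_mul_of_nonneg_left (one_sub_exp_neg_le x) (rpow_nonneg hx.le _)
    _ = x ^ (1 - β) := by rw [← rpow_add_one hx.ne']; ring_nf

lemma integral_rpow_mul_one_sub_exp_neg (hβ : 0 < β) (hβ1 : β < 1) :
    ∫ u in Ioi 0, u ^ (-β - 1) * (1 - rexp (-u)) = Gamma (1 - β) / β := by
  have hu : ∀ x ∈ Ioi (0 : ℝ), HasDerivAt (fun x => -β⁻¹ * x ^ (-β)) (x ^ (-β - 1)) x := by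
    intro x hx
    refine ((hasDerivAt_rpow_const (Or.inl (ne_of_gt hx))).const_mul (-β⁻¹)).congr_deriv ?_
    field_simp
  have hv : ∀ x ∈ Ioi (0 : ℝ), HasDerivAt (fun x : ℝ => 1 - rexp (-x)) (rexp (-x)) x := by
    intro x _
    simpa using ((hasDerivAt_neg x).exp).const_sub 1
  have hGamma : IntegrableOn (fun x : ℝ => rexp (-x) * x ^ (-β)) (Ioi 0) := by
    simpa using GammaIntegral_convergent (s := 1 - β) (by linarith)
  have h_zero : Tendsto (fun x : ℝ => -β⁻¹ * x ^ (-β) * (1 - rexp (-x))) (𝓝[>] 0) (𝓝 0) := by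
    simpa [mul_assoc] using (tendsto_rpow_neg_mul_one_sub_exp_neg_nhdsGT_zero hβ1).const_mul (-β⁻¹)
  have h_infty : Tendsto (fun x : ℝ => -β⁻¹ * x ^ (-β) * (1 - rexp (-x))) atTop (𝓝 0) := by
    simpa using ((tendsto_rpow_neg_atTop hβ).const_mul (-β⁻¹)).mul
      (tendsto_exp_neg_atTop_nhds_zero.const_sub 1)
  have hibp := integral_Ioi_mul_deriv_eq_deriv_mul hu hv
    (IntegrableOn.congr_fun (hGamma.const_mul (-β⁻¹))
      (fun x _ => by simp only [Pi.mul_apply]; ring) measurableSet_Ioi)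
    (integrableOn_rpow_mul_one_sub_exp_neg hβ hβ1) h_zero h_infty
  have hGamma_eq : Gamma (1 - β) = ∫ x in Ioi 0, rexp (-x) * x ^ (-β) := by
    simpa using Gamma_eq_integral (s := 1 - β) (by linarith)
  have hlhs : ∫ x in Ioi 0, -β⁻¹ * x ^ (-β) * rexp (-x) = -(Gamma (1 - β) / β) := by
    rw [hGamma_eq, div_eq_inv_mul, ← neg_mul, ← integral_const_mul]
    congr 1 with x
    ring
  linarith

-- The integrand of `integral_comp_rpow_Ioi` for `p = -1`, rescaled by `u = c x`.
lemma rpow_mul_one_sub_exp_neg_div_comp_inv {c : ℝ} (hc : 0 < c) {x : ℝ} (hx : 0 < x) :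
    (|(-1 : ℝ)| * x ^ ((-1 : ℝ) - 1)) •
        ((x ^ (-1 : ℝ)) ^ (β - 1) * (1 - rexp (-(c / x ^ (-1 : ℝ))))) =
      c ^ (β + 1) * ((c * x) ^ (-β - 1) * (1 - rexp (-(c * x)))) := by
  rw [rpow_neg_one, div_inv_eq_mul, inv_rpow hx.le, ← rpow_neg hx.le, mul_rpow hc.le hx.le,
    smul_eq_mul, abs_neg, abs_one, one_mul]
  have : c ^ (β + 1) * c ^ (-β - 1) = 1 := by rw [← rpow_add hc]; norm_num
  calc _ = (x ^ ((-1 : ℝ) - 1) * x ^ (-(β - 1))) * (1 - rexp (-(c * x))) := by ring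
    _ = x ^ (-β - 1) * (1 - rexp (-(c * x))) := by rw [← rpow_add hx]; ring_nf
    _ = _ := by rw [← mul_assoc, ← mul_assoc, this, one_mul]

lemma integrableOn_rpow_mul_one_sub_exp_neg_div (hβ : 0 < β) (hβ1 : β < 1) {c : ℝ} (hc : 0 < c) :
    IntegrableOn (fun s : ℝ => s ^ (β - 1) * (1 - rexp (-(c / s)))) (Ioi 0) := by
  rw [← integrableOn_Ioi_comp_rpow_iff _ (by norm_num : (-1 : ℝ) ≠ 0)]
  refine IntegrableOn.congr_fun ?_
    (fun x hx => (rpow_mul_one_sub_exp_neg_div_comp_inv hc hx).symm) measurableSet_Ioi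
  refine Integrable.const_mul ?_ _
  refine (integrableOn_Ioi_comp_mul_left_iff (fun u => u ^ (-β - 1) * (1 - rexp (-u))) 0 hc).2 ?_
  simpa using integrableOn_rpow_mul_one_sub_exp_neg hβ hβ1

lemma integral_rpow_mul_one_sub_exp_neg_div (hβ : 0 < β) (hβ1 : β < 1) {c : ℝ} (hc : 0 < c) :
    ∫ s in Ioi 0, s ^ (β - 1) * (1 - rexp (-(c / s))) = c ^ β * (Gamma (1 - β) / β) := by
  rw [← integral_comp_rpow_Ioi _ (by norm_num : (-1 : ℝ) ≠ 0),
    setIntegral_congr_fun measurableSet_Ioi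
      (fun x hx => rpow_mul_one_sub_exp_neg_div_comp_inv hc hx),
    integral_const_mul, integral_comp_mul_left_Ioi (fun u => u ^ (-β - 1) * (1 - rexp (-u))) 0 hc,
    mul_zero, integral_rpow_mul_one_sub_exp_neg hβ hβ1, smul_eq_mul, ← mul_assoc,
    rpow_add hc, rpow_one, mul_assoc (c ^ β), mul_inv_cancel₀ hc.ne', mul_one]

end OneDimensional

section InnerProductSpace

open Module

variable {V : Type*} [NormedAddCommGroup V] [InnerProductSpace ℝ V]

open Complex in
lemma re_cexp_gaussian_sub_cexp_gaussian_mul_I (s : ℝ) (x t : V) :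
    (cexp (-(s : ℂ) * ‖t‖ ^ 2 + 0 * (inner ℝ x t : ℝ)) -
        cexp (-(s : ℂ) * ‖t‖ ^ 2 + I * (inner ℝ x t : ℝ))).re =
      rexp (-s * ‖t‖ ^ 2) * (1 - Real.cos (inner ℝ t x)) := by
  rw [sub_re, exp_re, exp_re]
  simp [← ofReal_pow, real_inner_comm, mul_sub]

lemma one_sub_cos_inner_div_norm_rpow_eq_integral {q : ℝ} (hq : 0 < q) (x t : V) :
    (1 - Real.cos (inner ℝ t x)) / ‖t‖ ^ q = (Gamma (q / 2))⁻¹ *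
      ∫ s in Ioi 0, s ^ (q / 2 - 1) * (rexp (-s * ‖t‖ ^ 2) * (1 - Real.cos (inner ℝ t x))) := by
  rcases eq_or_ne t 0 with rfl | ht
  · simp
  have hB : 0 < ‖t‖ ^ 2 := by positivity
  have hGamma : ∫ s in Ioi 0, s ^ (q / 2 - 1) * rexp (-s * ‖t‖ ^ 2) =
      (1 / ‖t‖ ^ 2) ^ (q / 2) * Gamma (q / 2) := by
    simpa only [neg_mul, mul_comm (‖t‖ ^ 2)] using
      integral_rpow_mul_exp_neg_mul_Ioi (half_pos hq) hB
  have hnorm : (‖t‖ ^ 2) ^ (q / 2) = ‖t‖ ^ q := by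
    rw [← rpow_natCast, ← rpow_mul (norm_nonneg t)]
    congr 1
    ring
  simp_rw [← mul_assoc]
  rw [integral_mul_const, hGamma, div_rpow zero_le_one hB.le, one_rpow, hnorm]
  field_simp [(Gamma_pos_of_pos (half_pos hq)).ne']

variable [FiniteDimensional ℝ V] [MeasurableSpace V] [BorelSpace V] {s : ℝ}

open Complex in
lemma integrable_exp_neg_mul_sq_norm_mul_one_sub_cos (hs : 0 < s) (x : V) :
    Integrable fun t : V => rexp (-s * ‖t‖ ^ 2) * (1 - Real.cos (inner ℝ t x)) := by
  have hs' : 0 < (s : ℂ).re := hs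
  refine ((GaussianFourier.integrable_cexp_neg_mul_sq_norm_add hs' 0 x).sub
    (GaussianFourier.integrable_cexp_neg_mul_sq_norm_add hs' I x)).re.congr ?_
  exact .of_forall fun t => re_cexp_gaussian_sub_cexp_gaussian_mul_I s x t

open Complex in
lemma integral_exp_neg_mul_sq_norm_mul_one_sub_cos (hs : 0 < s) (x : V) :
    ∫ t : V, rexp (-s * ‖t‖ ^ 2) * (1 - Real.cos (inner ℝ t x)) =
      (π / s) ^ ((finrank ℝ V : ℝ) / 2) * (1 - rexp (-(‖x‖ ^ 2 / (4 * s)))) := by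
  have hs' : 0 < (s : ℂ).re := hs
  have h0 := GaussianFourier.integrable_cexp_neg_mul_sq_norm_add hs' 0 x
  have hI := GaussianFourier.integrable_cexp_neg_mul_sq_norm_add hs' I x
  have hre := integral_re (h0.sub hI)
  simp only [Pi.sub_apply, RCLike.re_to_complex, re_cexp_gaussian_sub_cexp_gaussian_mul_I] at hre
  rw [hre, integral_sub h0 hI,
    GaussianFourier.integral_cexp_neg_mul_sq_norm_add hs',
    GaussianFourier.integral_cexp_neg_mul_sq_norm_add hs']
  have hcoef : (π / s : ℂ) ^ ((finrank ℝ V : ℂ) / 2) =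
      ((π / s) ^ ((finrank ℝ V : ℝ) / 2) : ℝ) := by
    rw [ofReal_cpow (by positivity)]
    push_cast
    rfl
  have hexp : I ^ 2 * (‖x‖ : ℂ) ^ 2 / (4 * s) = ((-(‖x‖ ^ 2 / (4 * s)) : ℝ) : ℂ) := by
    push_cast
    rw [I_sq]
    ring
  rw [hcoef, hexp, ← mul_sub, re_ofReal_mul, sub_re, exp_ofReal_re]
  simp

variable {α : ℝ}

lemma integral_rpow_mul_exp_neg_mul_sq_norm_mul_one_sub_cos (hs : 0 < s) (x : V) :
    ∫ t : V, s ^ ((finrank ℝ V + α) / 2 - 1) *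
        (rexp (-s * ‖t‖ ^ 2) * (1 - Real.cos (inner ℝ t x))) =
      π ^ ((finrank ℝ V : ℝ) / 2) * (s ^ (α / 2 - 1) * (1 - rexp (-(‖x‖ ^ 2 / 4 / s)))) := by
  have hpow : s ^ ((finrank ℝ V + α) / 2 - 1) / s ^ ((finrank ℝ V : ℝ) / 2) =
      s ^ (α / 2 - 1) := by
    rw [← rpow_sub hs]
    ring_nf
  rw [integral_const_mul, integral_exp_neg_mul_sq_norm_mul_one_sub_cos hs, div_rpow pi_pos.le hs.le,
    ← hpow, div_div]
  field_simp

lemma integrable_rpow_mul_exp_neg_mul_sq_norm_mul_one_sub_cos (hα : 0 < α) (hα2 : α < 2)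
    {x : V} (hx : x ≠ 0) :
    Integrable (Function.uncurry fun (s : ℝ) (t : V) => s ^ ((finrank ℝ V + α) / 2 - 1) *
        (rexp (-s * ‖t‖ ^ 2) * (1 - Real.cos (inner ℝ t x))))
      ((volume.restrict (Ioi 0)).prod volume) := by
  refine (integrable_prod_iff (by fun_prop)).2 ⟨?_, ?_⟩
  · filter_upwards [ae_restrict_mem measurableSet_Ioi] with s hs
    exact (integrable_exp_neg_mul_sq_norm_mul_one_sub_cos hs x).const_mul (s ^ _)
  · refine Integrable.congr ((integrableOn_rpow_mul_one_sub_exp_neg_div (half_pos hα) (by linarith)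
      (by positivity : 0 < ‖x‖ ^ 2 / 4)).const_mul (π ^ ((finrank ℝ V : ℝ) / 2))) ?_
    filter_upwards [ae_restrict_mem measurableSet_Ioi] with s (hs : 0 < s)
    rw [← integral_rpow_mul_exp_neg_mul_sq_norm_mul_one_sub_cos hs x]
    refine integral_congr_ae (.of_forall fun t => (norm_of_nonneg ?_).symm)
    have := sub_nonneg.2 (cos_le_one (inner ℝ t x))
    positivity

theorem InnerProductSpace.integral_one_sub_cos_inner_div_norm_rpow (hα : 0 < α) (hα2 : α < 2)
    {x : V} (hx : x ≠ 0) :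
    ∫ t : V, (1 - Real.cos (inner ℝ t x)) / ‖t‖ ^ ((finrank ℝ V : ℝ) + α) =
      energyConst (finrank ℝ V) α * ‖x‖ ^ α := by
  have hq : 0 < (finrank ℝ V : ℝ) + α := by positivity
  simp_rw [one_sub_cos_inner_div_norm_rpow_eq_integral hq x]
  rw [integral_const_mul,
    ← integral_integral_swap (integrable_rpow_mul_exp_neg_mul_sq_norm_mul_one_sub_cos hα hα2 hx),
    setIntegral_congr_fun measurableSet_Ioi
      (fun s hs => integral_rpow_mul_exp_neg_mul_sq_norm_mul_one_sub_cos hs x),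
    integral_const_mul, integral_rpow_mul_one_sub_exp_neg_div (half_pos hα) (by linarith)
      (by positivity)]
  have hc : (‖x‖ ^ 2 / 4) ^ (α / 2) = ‖x‖ ^ α / 2 ^ α := by
    rw [show ‖x‖ ^ 2 / 4 = (‖x‖ / 2) ^ (2 : ℝ) by norm_num [div_pow], ← rpow_mul (by positivity),
      mul_div_cancel₀ α two_ne_zero, div_rpow (norm_nonneg x) zero_le_two]
  rw [hc, energyConst]
  field_simp

end InnerProductSpace

/-- For `α ∈ (0,2)`, `d ≥ 1` and any nonzero `x ∈ ℝ^d`,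
`∫ (1 - cos ⟪t,x⟫) / ‖t‖^{d+α} dt = C(d,α) ‖x‖^α`. -/
theorem integral_one_sub_cos_inner_div_norm_rpow
    (d : ℕ) (α : ℝ) (hα : 0 < α) (hα2 : α < 2)
    (x : EuclideanSpace ℝ (Fin d)) (hx : x ≠ 0) :
    ∫ t : EuclideanSpace ℝ (Fin d),
        (1 - Real.cos (inner ℝ t x)) / ‖t‖ ^ ((d : ℝ) + α) =
      energyConst d α * ‖x‖ ^ α := by
  simpa using InnerProductSpace.integral_one_sub_cos_inner_div_norm_rpow hα hα2 hx
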